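/- The function k_ntk(β) = (1/π)(√(1−β²) + 2β(π − arccos β)) admits on [−1,1] the absolutely convergent series expansion k_ntk(β) = 1/π + β + (1/π)·Σ_{ℓ=0}^∞ [(2ℓ+3)·(2ℓ)! / (2^{2ℓ}·(ℓ!)²·(2ℓ+1)·(2ℓ+2))]·β^{2ℓ+2}. -/

import Mathlib

/-- The Taylor coefficients (beyond the constant and linear terms, up to the `1/π`
factor) of the NTK angular function `k_ntk`. -/
noncomputable def antk (ℓ : ℕ) : ℝ :=
  ((2 * ℓ + 3 : ℕ) : ℝ) * ((2 * ℓ).factorial : ℝ) /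
    (2 ^ (2 * ℓ) * ((ℓ.factorial : ℝ)) ^ 2 * ((2 * ℓ + 1 : ℕ) : ℝ) * ((2 * ℓ + 2 : ℕ) : ℝ))

/-- The depth-1 NTK angular function. -/
noncomputable def kntk (β : ℝ) : ℝ :=
  (1 / Real.pi) * (Real.sqrt (1 - β ^ 2) + 2 * β * (Real.pi - Real.arccos β))

open Real Filter Set Topology

/-!
Let `c n = (2n choose n) / 4ⁿ`, the coefficients of the binomial series of `(1 - x)^(-1/2)`.
Then `antk n = 2 c n / (2n+1) - c n / (2n+2)`. The first part is the coefficient of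
`2β · arcsin β`, by integrating `(1 - β²)^(-1/2)` term by term; the second is that of
`1 - √(1 - β²) = 1 - (1 - β²) · (1 - β²)^(-1/2)`. This proves the expansion for `|β| < 1`.
All coefficients are nonnegative, so letting `β → 1⁻` gives the endpoints `β = ±1`.
-/

noncomputable def invSqrtCoeff (n : ℕ) : ℝ := (n.centralBinom : ℝ) / 4 ^ n

lemma invSqrtCoeff_zero : invSqrtCoeff 0 = 1 := by simp [invSqrtCoeff]

lemma invSqrtCoeff_succ (n : ℕ) :
    invSqrtCoeff (n + 1) = invSqrtCoeff n * (2 * n + 1) / (2 * n + 2) := by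
  have h : ((n + 1 : ℕ) : ℝ) * (n + 1).centralBinom = 2 * (2 * n + 1) * n.centralBinom := by
    exact_mod_cast Nat.succ_mul_centralBinom_succ n
  unfold invSqrtCoeff
  field_simp
  push_cast at h
  linear_combination 2 * 4 ^ n * h

lemma invSqrtCoeff_nonneg (n : ℕ) : 0 ≤ invSqrtCoeff n := by
  unfold invSqrtCoeff; positivity

lemma invSqrtCoeff_le_one (n : ℕ) : invSqrtCoeff n ≤ 1 :=
  div_le_one_of_le₀ (by exact_mod_cast Nat.centralBinom_le_four_pow n) (by positivity)

lemma ring_choose_eq_invSqrtCoeff (n : ℕ) :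
    Ring.choose ((1 / 2 : ℝ) + n - 1) n = invSqrtCoeff n := by
  rw [Ring.choose_eq_smul, Polynomial.descPochhammer_smeval_eq_ascPochhammer,
    Polynomial.ascPochhammer_smeval_eq_eval, smul_eq_mul, inv_mul_eq_div,
    show (1 / 2 : ℝ) + n - 1 - n + 1 = 1 / 2 by ring]
  induction n with
  | zero => simp [invSqrtCoeff_zero]
  | succ n ih =>
    rw [ascPochhammer_succ_eval, invSqrtCoeff_succ, ← ih, Nat.factorial_succ]
    push_cast
    field_simp
    ring

lemma hasSum_invSqrtCoeff_mul_pow {x : ℝ} (hx : |x| < 1) :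
    HasSum (fun n => invSqrtCoeff n * x ^ n) (1 / √(1 - x)) := by
  have h := (one_div_one_sub_rpow_hasFPowerSeriesOnBall_zero (1 / 2)).hasSum
    (y := x) (by simpa [enorm_eq_nnnorm, ← NNReal.coe_lt_one] using hx)
  rw [zero_add, ← sqrt_eq_rpow] at h
  refine h.congr_fun fun n => ?_
  rw [FormalMultilinearSeries.ofScalars_apply_eq, ring_choose_eq_invSqrtCoeff, smul_eq_mul]

lemma hasSum_one_sub_sqrt {x : ℝ} (hx : |x| < 1) :
    HasSum (fun n => invSqrtCoeff n / (2 * n + 2) * x ^ (n + 1)) (1 - √(1 - x)) := by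
  have h := hasSum_invSqrtCoeff_mul_pow hx
  -- `√(1 - x) = (1 - x) · (1 - x)^(-1/2)`: subtract the shifted series from the original one
  have hshift : HasSum (fun n => invSqrtCoeff (n + 1) * x ^ (n + 1)) (1 / √(1 - x) - 1) := by
    simpa [invSqrtCoeff_zero] using (hasSum_nat_add_iff' 1).2 h
  have hmul : HasSum (fun n => invSqrtCoeff n * x ^ (n + 1)) (x * (1 / √(1 - x))) :=
    (h.mul_left x).congr_fun fun n => by ring
  have hval : x * (1 / √(1 - x)) - (1 / √(1 - x) - 1) = 1 - √(1 - x) := by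
    have hpos : 0 < 1 - x := by linarith [abs_lt.1 hx]
    have hsq := mul_self_sqrt hpos.le
    field_simp [(sqrt_pos.2 hpos).ne']
    linear_combination hsq
  refine hval ▸ (hmul.sub hshift).congr_fun fun n => ?_
  rw [invSqrtCoeff_succ]
  field_simp
  ring

lemma hasDerivAt_tsum_odd_pow {c : ℕ → ℝ} {C : ℝ} (hc : ∀ n, |c n| ≤ C) {y : ℝ} (hy : |y| < 1) :
    HasDerivAt (fun x => ∑' n, c n / (2 * n + 1) * x ^ (2 * n + 1)) (∑' n, c n * y ^ (2 * n)) y := by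
  obtain ⟨r, hyr, hr1⟩ := exists_between hy
  have hr0 : 0 < r := (abs_nonneg y).trans_lt hyr
  have hu : Summable fun n : ℕ => C * (r ^ 2) ^ n :=
    (summable_geometric_of_lt_one (by positivity) (by nlinarith)).mul_left C
  have h0 : Summable fun n : ℕ => c n / (2 * n + 1) * (0 : ℝ) ^ (2 * n + 1) := by simp
  refine hasDerivAt_tsum_of_isPreconnected (g := fun n x => c n / (2 * n + 1) * x ^ (2 * n + 1))
    (g' := fun n x => c n * x ^ (2 * n)) hu isOpen_Ioo isPreconnected_Ioo (fun n x _ => ?_)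
    (fun n x hx => ?_) (show (0 : ℝ) ∈ Ioo (-r) r by simp [hr0]) h0 (abs_lt.1 hyr)
  · refine ((hasDerivAt_pow (2 * n + 1) x).const_mul (c n / (2 * n + 1))).congr_deriv ?_
    rw [Nat.add_sub_cancel]
    push_cast
    field_simp
  · rw [norm_mul, norm_pow, ← pow_mul]
    gcongr
    · exact (abs_nonneg _).trans (hc 0)
    · exact hc n
    · exact (abs_lt.2 hx).le

lemma hasSum_arcsin {x : ℝ} (hx : |x| < 1) :
    HasSum (fun n => invSqrtCoeff n / (2 * n + 1) * x ^ (2 * n + 1)) (arcsin x) := by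
  set S := fun z : ℝ => ∑' n, invSqrtCoeff n / (2 * n + 1) * z ^ (2 * n + 1)
  have hc (n : ℕ) : |invSqrtCoeff n| ≤ 1 :=
    abs_le.2 ⟨by linarith [invSqrtCoeff_nonneg n], invSqrtCoeff_le_one n⟩
  have hS : ∀ y ∈ Ioo (-1 : ℝ) 1, HasDerivAt S (1 / √(1 - y ^ 2)) y := by
    intro y hy
    have hy2 : |y ^ 2| < 1 := by
      rw [abs_pow, sq_lt_one_iff_abs_lt_one, abs_abs]; exact abs_lt.2 hy
    have hsum := (hasSum_invSqrtCoeff_mul_pow hy2).congr_fun fun n => by rw [← pow_mul]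
    rw [← hsum.tsum_eq]
    exact hasDerivAt_tsum_odd_pow hc (abs_lt.2 hy)
  have hsummable : Summable fun n => invSqrtCoeff n / (2 * n + 1) * x ^ (2 * n + 1) := by
    refine (summable_geometric_of_lt_one (abs_nonneg x) hx).of_norm_bounded fun n => ?_
    rw [norm_mul, norm_pow, Real.norm_eq_abs x]
    have hcoeff : ‖invSqrtCoeff n / (2 * n + 1)‖ ≤ 1 := by
      rw [Real.norm_eq_abs, abs_of_nonneg (div_nonneg (invSqrtCoeff_nonneg n) (by positivity))]
      exact div_le_one_of_le₀ (by linarith [invSqrtCoeff_le_one n]) (by positivity)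
    have hpow : |x| ^ (2 * n + 1) ≤ |x| ^ n :=
      pow_le_pow_of_le_one (abs_nonneg x) hx.le (by omega)
    simpa only [one_mul] using mul_le_mul hcoeff hpow (by positivity) zero_le_one
  have heq : EqOn S arcsin (Ioo (-1) 1) :=
    isOpen_Ioo.eqOn_of_deriv_eq isPreconnected_Ioo
      (fun y hy => (hS y hy).differentiableAt.differentiableWithinAt)
      (fun y hy => (hasDerivAt_arcsin hy.1.ne' hy.2.ne).differentiableAt.differentiableWithinAt)
      (fun y hy => by rw [(hS y hy).deriv, deriv_arcsin]) (x := 0) (by norm_num) (by simp [S])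
  exact heq (abs_lt.1 hx) ▸ hsummable.hasSum

lemma factorial_two_mul_eq_centralBinom_mul (n : ℕ) :
    ((2 * n).factorial : ℝ) = n.centralBinom * n.factorial ^ 2 := by
  rw [Nat.centralBinom_eq_two_mul_choose, two_mul, ← Nat.add_choose_mul_factorial_mul_factorial]
  push_cast
  ring

lemma antk_eq (n : ℕ) :
    antk n = 2 * (invSqrtCoeff n / (2 * n + 1)) - invSqrtCoeff n / (2 * n + 2) := by
  rw [antk, invSqrtCoeff, factorial_two_mul_eq_centralBinom_mul, pow_mul]
  push_cast
  field_simp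
  ring

noncomputable def kntkTail (β : ℝ) : ℝ := √(1 - β ^ 2) - 1 + 2 * β * arcsin β

lemma kntk_sub_eq_kntkTail (β : ℝ) : kntk β - (1 / π + β) = kntkTail β / π := by
  rw [kntk, kntkTail, arccos_eq_pi_div_two_sub_arcsin]
  field_simp
  ring

lemma kntkTail_neg (β : ℝ) : kntkTail (-β) = kntkTail β := by
  simp only [kntkTail, neg_sq, arcsin_neg]
  ring

lemma hasSum_antk_mul_pow {β : ℝ} (hβ : |β| < 1) :
    HasSum (fun n => antk n * β ^ (2 * n + 2)) (kntkTail β) := by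
  have hβ2 : |β ^ 2| < 1 := by rwa [abs_pow, sq_lt_one_iff_abs_lt_one, abs_abs]
  have hsqrt := (hasSum_one_sub_sqrt hβ2).congr_fun fun n => by rw [← pow_mul, mul_add, mul_one]
  have harcsin : HasSum (fun n => 2 * (invSqrtCoeff n / (2 * n + 1)) * β ^ (2 * n + 2))
      (2 * β * arcsin β) :=
    ((hasSum_arcsin hβ).mul_left (2 * β)).congr_fun fun n => by ring
  have hval : 2 * β * arcsin β - (1 - √(1 - β ^ 2)) = kntkTail β := by
    rw [kntkTail]; ring
  exact hval ▸ (harcsin.sub hsqrt).congr_fun fun n => by rw [antk_eq]; ring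

lemma hasSum_of_nonneg_of_tendsto_nhdsLT_one {a : ℕ → ℝ} {k : ℕ → ℕ} {g : ℝ → ℝ} {l : ℝ}
    (ha : ∀ n, 0 ≤ a n) (hg : ∀ x ∈ Ioo (0 : ℝ) 1, HasSum (fun n => a n * x ^ k n) (g x))
    (hl : Tendsto g (𝓝[<] 1) (𝓝 l)) : HasSum a l := by
  -- partial sums of `a` are limits of lower bounds of `g`, and `∑ a` bounds `g` on `(0, 1)`
  have hmem : ∀ᶠ x in 𝓝[<] (1 : ℝ), x ∈ Ioo 0 1 := Ioo_mem_nhdsLT zero_lt_one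
  have hpartial (s : Finset ℕ) : ∑ n ∈ s, a n ≤ l := by
    have hcont : Continuous fun x : ℝ => ∑ n ∈ s, a n * x ^ k n := by fun_prop
    have hlim : Tendsto (fun x : ℝ => ∑ n ∈ s, a n * x ^ k n) (𝓝[<] 1) (𝓝 (∑ n ∈ s, a n)) := by
      simpa using (hcont.tendsto 1).mono_left nhdsWithin_le_nhds
    refine le_of_tendsto_of_tendsto hlim hl ?_
    filter_upwards [hmem] with x hx
    exact sum_le_hasSum s (fun n _ => mul_nonneg (ha n) (pow_nonneg hx.1.le _)) (hg x hx)
  have hsum : Summable a := summable_of_sum_le ha hpartial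
  have hle : l ≤ ∑' n, a n := by
    refine le_of_tendsto hl ?_
    filter_upwards [hmem] with x hx
    refine hasSum_le (fun n => ?_) (hg x hx) hsum.hasSum
    exact mul_le_of_le_one_right (ha n) (pow_le_one₀ hx.1.le hx.2.le)
  exact (le_antisymm (tsum_le_of_sum_le ha hpartial) hle) ▸ hsum.hasSum

lemma antk_nonneg (n : ℕ) : 0 ≤ antk n := by
  unfold antk; positivity

lemma hasSum_antk : HasSum antk (kntkTail 1) :=
  hasSum_of_nonneg_of_tendsto_nhdsLT_one (k := fun n => 2 * n + 2) antk_nonneg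
    (fun x hx => hasSum_antk_mul_pow (abs_lt.2 ⟨by linarith [hx.1], hx.2⟩))
    (((by unfold kntkTail; fun_prop : Continuous kntkTail).tendsto 1).mono_left nhdsWithin_le_nhds)

/-- On `[−1,1]`, `k_ntk(β) = 1/π + β + (1/π)·Σ_{ℓ=0}^∞ a_ℓ β^{2ℓ+2}`, the series
converging (absolutely, as any `HasSum` over ℝ). -/
theorem kntk_taylor_series (β : ℝ) (hβ : β ∈ Set.Icc (-1 : ℝ) 1) :
    HasSum (fun ℓ : ℕ => (1 / Real.pi) * antk ℓ * β ^ (2 * ℓ + 2))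
      (kntk β - (1 / Real.pi + β)) := by
  have key : HasSum (fun n => antk n * β ^ (2 * n + 2)) (kntkTail β) := by
    rcases (abs_le.2 hβ).lt_or_eq with hlt | heq
    · exact hasSum_antk_mul_pow hlt
    · have hpow (n : ℕ) : β ^ (2 * n + 2) = 1 := by
        rw [show 2 * n + 2 = 2 * (n + 1) by ring, pow_mul, ← sq_abs, heq, one_pow, one_pow]
      have hval : kntkTail β = kntkTail 1 := by
        rcases (abs_eq zero_le_one).1 heq with rfl | rfl
        · rfl
        · exact kntkTail_neg 1
      simpa [hpow, hval] using hasSum_antk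
  rw [kntk_sub_eq_kntkTail]
  exact (key.div_const π).congr_fun fun n => by ring
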